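/- Let (S, 𝓕) be a measurable space, let P be a probability measure on it, let g : S → ℝ be bounded and measurable, and let 0 < β < γ. Then (1/γ)·log ∫ e^{γ g} dP = sup over all probability measures Q on (S,𝓕) of [ (1/β)·log ∫ e^{β g} dQ − (1/(γ−β))·R_{γ/(γ−β)}(Q‖P) ]. -/

import Mathlib

open MeasureTheory Classical

/-- The Rényi divergence of degree `α` of `Q` with respect to `P`:
`R_α(Q‖P) = (1/(α(α−1)))·log ∫ (dQ/dP)^α dP` if `Q ≪ P`, and `+∞` otherwise. -/
noncomputable def renyiDiv {S : Type*} [MeasurableSpace S] (α : ℝ)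
    (Q P : Measure S) : EReal :=
  if Q ≪ P then
    (((α * (α - 1))⁻¹ : ℝ) : EReal) * ENNReal.log (∫⁻ x, Q.rnDeriv P x ^ α ∂P)
  else ⊤

/-!
Write `α = γ/(γ−β)`, so that `γ/β` and `α` are Hölder conjugate. For `Q ≪ P`, Hölder's
inequality gives
`∫ e^{βg} dQ = ∫ e^{βg} (dQ/dP) dP ≤ (∫ e^{γg} dP)^{β/γ} (∫ (dQ/dP)^α dP)^{1/α}`,
and taking logarithms and dividing by `β` is exactly the upper bound, since
`(γ−β)⁻¹ (α(α−1))⁻¹ = (βα)⁻¹`. Equality holds for the tilted measure `dQ ∝ e^{(γ−β)g} dP`,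
for which `e^{βg}·dQ/dP` and `(dQ/dP)^α` are both proportional to `e^{γg}`.
-/

open Real
open scoped ENNReal

section

variable {S : Type*} [MeasurableSpace S]

lemma integrable_exp_mul_of_abs_le (μ : Measure S) [IsFiniteMeasure μ] {g : S → ℝ}
    (hg : Measurable g) {M : ℝ} (hM : ∀ x, |g x| ≤ M) (c : ℝ) :
    Integrable (fun x ↦ exp (c * g x)) μ := by
  refine .of_bound (hg.const_mul c).exp.aestronglyMeasurable (exp (|c| * M))
    (ae_of_all _ fun x ↦ ?_)
  rw [norm_of_nonneg (exp_pos _).le, exp_le_exp]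
  calc c * g x ≤ |c| * |g x| := (le_abs_self _).trans (abs_mul _ _).le
    _ ≤ |c| * M := mul_le_mul_of_nonneg_left (hM x) (abs_nonneg c)

lemma lintegral_ofReal_exp {μ : Measure S} {f : S → ℝ}
    (hf : Integrable (fun x ↦ exp (f x)) μ) :
    ∫⁻ x, ENNReal.ofReal (exp (f x)) ∂μ = ENNReal.ofReal (∫ x, exp (f x) ∂μ) :=
  (ofReal_integral_eq_lintegral_ofReal hf (ae_of_all _ fun _ ↦ (exp_pos _).le)).symm

theorem lintegral_le_lintegral_rpow_mul_lintegral_rnDeriv_rpow {Q P : Measure S}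
    [Q.HaveLebesgueDecomposition P] (hQP : Q ≪ P) {p q : ℝ} (hpq : p.HolderConjugate q)
    {f : S → ℝ≥0∞} (hf : AEMeasurable f P) :
    ∫⁻ x, f x ∂Q ≤ (∫⁻ x, f x ^ p ∂P) ^ (1 / p) * (∫⁻ x, Q.rnDeriv P x ^ q ∂P) ^ (1 / q) := by
  rw [← lintegral_rnDeriv_mul hQP hf]
  simpa only [Pi.mul_apply, mul_comm] using
    ENNReal.lintegral_mul_le_Lp_mul_Lq P hpq hf (Q.measurable_rnDeriv P).aemeasurable

lemma lintegral_rnDeriv_tilted_rpow (μ : Measure S) [SigmaFinite μ] {f : S → ℝ}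
    (hf : AEMeasurable f μ) {q : ℝ} (hq : 0 ≤ q) (hqf : Integrable (fun x ↦ exp (q * f x)) μ) :
    ∫⁻ x, (μ.tilted f).rnDeriv μ x ^ q ∂μ
      = ENNReal.ofReal ((∫ x, exp (q * f x) ∂μ) / (∫ x, exp (f x) ∂μ) ^ q) := by
  have hZ : 0 ≤ ∫ x, exp (f x) ∂μ := integral_nonneg fun _ ↦ (exp_pos _).le
  calc ∫⁻ x, (μ.tilted f).rnDeriv μ x ^ q ∂μ
      = ∫⁻ x, ENNReal.ofReal (exp (q * f x) / (∫ x, exp (f x) ∂μ) ^ q) ∂μ := by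
        refine lintegral_congr_ae ((rnDeriv_tilted_left_self hf).mono fun x hx ↦ ?_)
        simp only at hx ⊢
        rw [hx, ENNReal.ofReal_rpow_of_nonneg (by positivity) hq,
          div_rpow (exp_pos _).le hZ, mul_comm q, exp_mul]
    _ = _ := by
        rw [← ofReal_integral_eq_lintegral_ofReal (hqf.div_const _)
          (ae_of_all _ fun _ ↦ by positivity), integral_div]

lemma inv_sub_mul_inv_mul_div_sub_sub_one (β γ : ℝ) :
    (γ - β)⁻¹ * (γ / (γ - β) * (γ / (γ - β) - 1))⁻¹ = (β * (γ / (γ - β)))⁻¹ := by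
  rcases eq_or_ne (γ - β) 0 with h | h
  · simp [h]
  · rw [div_sub_one h, sub_sub_cancel]
    field_simp

lemma coe_inv_sub_mul_renyiDiv {β γ : ℝ} {Q P : Measure S} (hQP : Q ≪ P) :
    (((γ - β)⁻¹ : ℝ) : EReal) * renyiDiv (γ / (γ - β)) Q P
      = (((β * (γ / (γ - β)))⁻¹ : ℝ) : EReal)
          * ENNReal.log (∫⁻ x, Q.rnDeriv P x ^ (γ / (γ - β)) ∂P) := by
  rw [renyiDiv, if_pos hQP, ← mul_assoc, ← EReal.coe_mul, inv_sub_mul_inv_mul_div_sub_sub_one]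

end

lemma EReal.coe_mul_sub_coe_mul_le_of_le_add {a b c k : ℝ} {L : EReal} (hc : 0 < c)
    (hk : 0 < k) (h : (a : EReal) ≤ b + c * L) :
    ((k * a : ℝ) : EReal) - ((k * c : ℝ) : EReal) * L ≤ ((k * b : ℝ) : EReal) := by
  induction L using EReal.rec with
  | bot =>
    rw [EReal.coe_mul_bot_of_pos hc, EReal.add_bot, le_bot_iff] at h
    exact absurd h (EReal.coe_ne_bot a)
  | coe x =>
    norm_cast at h ⊢
    nlinarith
  | top =>
    rw [EReal.coe_mul_top_of_pos (mul_pos hk hc), EReal.sub_top]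
    exact bot_le

section

variable {S : Type*} [MeasurableSpace S] (P : Measure S) [IsProbabilityMeasure P] {β γ : ℝ}
  (hβ : 0 < β) (hβγ : β < γ) {g : S → ℝ} (hg : Measurable g) {M : ℝ} (hM : ∀ x, |g x| ≤ M)
include hβ hβγ hg hM

theorem renyi_variational_objective_le (Q : Measure S) [IsProbabilityMeasure Q] :
    ((β⁻¹ * log (∫ x, exp (β * g x) ∂Q) : ℝ) : EReal)
      - (((γ - β)⁻¹ : ℝ) : EReal) * renyiDiv (γ / (γ - β)) Q P
      ≤ ((γ⁻¹ * log (∫ x, exp (γ * g x) ∂P) : ℝ) : EReal) := by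
  have hδ : 0 < γ - β := sub_pos.2 hβγ
  have hγ : 0 < γ := hβ.trans hβγ
  by_cases hQP : Q ≪ P
  swap
  · rw [renyiDiv, if_neg hQP, EReal.coe_mul_top_of_pos (inv_pos.2 hδ), EReal.sub_top]
    exact bot_le
  have hpq : (γ / β).HolderConjugate (γ / (γ - β)) := by
    rw [Real.holderConjugate_iff]
    refine ⟨(one_lt_div hβ).2 hβγ, ?_⟩
    field_simp
    ring
  have hf : Measurable fun x ↦ ENNReal.ofReal (exp (β * g x)) :=
    (hg.const_mul β).exp.ennreal_ofReal
  have hpow : ∀ x, ENNReal.ofReal (exp (β * g x)) ^ (γ / β) = ENNReal.ofReal (exp (γ * g x)) := by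
    intro x
    rw [ENNReal.ofReal_rpow_of_pos (exp_pos _), ← exp_mul]
    field_simp
  have holder := lintegral_le_lintegral_rpow_mul_lintegral_rnDeriv_rpow hQP hpq hf.aemeasurable
  simp only [hpow, lintegral_ofReal_exp (integrable_exp_mul_of_abs_le _ hg hM _)] at holder
  have hlog := ENNReal.log_monotone holder
  rw [ENNReal.log_mul_add, ENNReal.log_rpow, ENNReal.log_rpow,
    ENNReal.log_ofReal_of_pos (integral_exp_pos (integrable_exp_mul_of_abs_le _ hg hM _)),
    ENNReal.log_ofReal_of_pos (integral_exp_pos (integrable_exp_mul_of_abs_le _ hg hM _)),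
    ← EReal.coe_mul] at hlog
  rw [coe_inv_sub_mul_renyiDiv hQP]
  convert EReal.coe_mul_sub_coe_mul_le_of_le_add (one_div_pos.2 (div_pos hγ hδ)) (inv_pos.2 hβ)
    hlog using 2
  · rw [mul_inv, one_div]
  · field_simp

theorem renyi_variational_objective_tilted :
    ((β⁻¹ * log (∫ x, exp (β * g x) ∂(P.tilted fun x ↦ (γ - β) * g x)) : ℝ) : EReal)
      - (((γ - β)⁻¹ : ℝ) : EReal) * renyiDiv (γ / (γ - β)) (P.tilted fun x ↦ (γ - β) * g x) P
      = ((γ⁻¹ * log (∫ x, exp (γ * g x) ∂P) : ℝ) : EReal) := by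
  have hδ : 0 < γ - β := sub_pos.2 hβγ
  have hγ : 0 < γ := hβ.trans hβγ
  have hαδ : γ / (γ - β) * (γ - β) = γ := div_mul_cancel₀ γ hδ.ne'
  have hZ : 0 < ∫ x, exp ((γ - β) * g x) ∂P :=
    integral_exp_pos (integrable_exp_mul_of_abs_le _ hg hM _)
  have hZγ : 0 < ∫ x, exp (γ * g x) ∂P :=
    integral_exp_pos (integrable_exp_mul_of_abs_le _ hg hM _)
  have hrenyi : ∫⁻ x, (P.tilted fun x ↦ (γ - β) * g x).rnDeriv P x ^ (γ / (γ - β)) ∂P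
      = ENNReal.ofReal
          ((∫ x, exp (γ * g x) ∂P) / (∫ x, exp ((γ - β) * g x) ∂P) ^ (γ / (γ - β))) := by
    rw [lintegral_rnDeriv_tilted_rpow P (hg.const_mul _).aemeasurable (div_pos hγ hδ).le]
    · simp only [← mul_assoc, hαδ]
    · simpa only [← mul_assoc, hαδ] using integrable_exp_mul_of_abs_le P hg hM γ
  have hgibbs : ∫ x, exp (β * g x) ∂(P.tilted fun x ↦ (γ - β) * g x)
      = (∫ x, exp (γ * g x) ∂P) / ∫ x, exp ((γ - β) * g x) ∂P := by
    rw [integral_exp_tilted]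
    simp only [Pi.add_apply, ← add_mul, sub_add_cancel]
  rw [coe_inv_sub_mul_renyiDiv (tilted_absolutelyContinuous _ _), hrenyi,
    ENNReal.log_ofReal_of_pos (by positivity), hgibbs, ← EReal.coe_mul, ← EReal.coe_sub,
    EReal.coe_eq_coe_iff, log_div hZγ.ne' hZ.ne', log_div hZγ.ne' (rpow_pos_of_pos hZ _).ne',
    log_rpow hZ]
  field_simp
  ring

end

/-- Variational formula with two risk parameters: for `0 < β < γ`,
`(1/γ)·log ∫ e^{γg} dP = sup_Q [ (1/β)·log ∫ e^{βg} dQ − (1/(γ−β))·R_{γ/(γ−β)}(Q‖P) ]`,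
the supremum being over all probability measures `Q`. -/
theorem renyi_variational_formula_two_params {S : Type*} [MeasurableSpace S]
    (P : Measure S) [IsProbabilityMeasure P] (β γ : ℝ) (hβ : 0 < β) (hβγ : β < γ)
    (g : S → ℝ) (hg : Measurable g) (hbd : ∃ M : ℝ, ∀ x, |g x| ≤ M) :
    ((γ⁻¹ * Real.log (∫ x, Real.exp (γ * g x) ∂P) : ℝ) : EReal) =
      ⨆ Q : {Q : Measure S // IsProbabilityMeasure Q},
        ((β⁻¹ * Real.log (∫ x, Real.exp (β * g x) ∂(Q : Measure S)) : ℝ) : EReal)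
          - (((γ - β)⁻¹ : ℝ) : EReal) * renyiDiv (γ / (γ - β)) (Q : Measure S) P := by
  obtain ⟨M, hM⟩ := hbd
  refine le_antisymm ?_ (iSup_le fun ⟨Q, _⟩ ↦ renyi_variational_objective_le P hβ hβγ hg hM Q)
  have := isProbabilityMeasure_tilted (integrable_exp_mul_of_abs_le P hg hM (γ - β))
  exact le_iSup_of_le ⟨_, this⟩ (renyi_variational_objective_tilted P hβ hβγ hg hM).ge
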